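/- There exists a constant C > 0 such that for all q ≥ 2 and all real x ≠ z, the quantity (∫_{Γ(x)} |(s ∂/∂s W_s(y,z))|_{s=t^2}|^q dt dy / t^2)^{1/q} is at most C/|x - z|, where Γ(x) = {(y,t) ∈ ℝ × (0,∞) : |x - y| < t} and W_s is the Hermite heat kernel. -/

import Mathlib

/-!
Write `a = e^{-s}`, `σ = 1 - e^{-2s}` and `N = (x - a y)² + (y - a x)²`, so that
`W_s(x, y) = π^{-1/2} (a/σ)^{1/2} e^{-N/(2σ)}` and `|∂ₛ log W_s(x, y)| ≤ (1 + N/σ)/σ`.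
Since `σ ≤ 2s`, `(x - y)² ≤ 2N` and `s e^{-s/3} ≤ 3σ`, this yields the Gaussian bound
`|s ∂ₛ W_s(x, y)| ≤ 18 e^{-(x-y)²/(16s)} / √s`.

Put `s = t²` and `r = |x - z|`. On the cone `Γ(x)` the kernel is at most `18/t`, and at most
`1152 t / r²` when `t ≤ r/2`, because then `|y - z| ≥ r/2` and `e^{-v} ≤ 1/v`. The sections
`{y : (y, t) ∈ Γ(x)}` have length `2t`, so the `q`-th power of the norm is at most
`2 ∫₀^∞ h(t)^q dt/t` for this piecewise majorant `h`, an elementary integral of size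
`(C/r)^q`.
-/

open MeasureTheory Real

/-- The Hermite (Mehler) heat kernel `W_s(x,y)`. -/
noncomputable def hermiteHeatKernel (s x y : ℝ) : ℝ :=
  Real.pi ^ (-(1 : ℝ) / 2) * (Real.exp (-s) / (1 - Real.exp (-2 * s))) ^ ((1 : ℝ) / 2) *
    Real.exp (-((x - Real.exp (-s) * y) ^ 2 + (y - Real.exp (-s) * x) ^ 2) /
      (2 * (1 - Real.exp (-2 * s))))

open Set

lemma one_sub_exp_neg_two_mul_pos {s : ℝ} (hs : 0 < s) : 0 < 1 - exp (-2 * s) :=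
  sub_pos.2 (exp_lt_one_iff.2 (by linarith))

lemma one_sub_exp_neg_two_mul_le (s : ℝ) : 1 - exp (-2 * s) ≤ 2 * s := by
  linarith [add_one_le_exp (-2 * s)]

lemma mul_exp_neg_div_three_le {s : ℝ} (hs : 0 ≤ s) :
    s * exp (-s / 3) ≤ 3 * (1 - exp (-2 * s)) := by
  have hu : (s / 3 + 1) * exp (-(s / 3)) ≤ 1 := by
    rw [exp_neg, ← div_eq_mul_inv, div_le_one (exp_pos _)]
    exact add_one_le_exp _
  have hmono : exp (-2 * s) ≤ exp (-(s / 3)) := exp_le_exp.2 (by linarith)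
  rw [show -s / 3 = -(s / 3) by ring]
  nlinarith

lemma one_add_mul_exp_neg_half_le {w : ℝ} (hw : 0 ≤ w) :
    (1 + w) * exp (-w / 2) ≤ 3 * exp (-w / 4) := by
  have h8 : 1 + w / 8 ≤ exp (w / 8) := by linarith [add_one_le_exp (w / 8)]
  have hsq : exp (w / 8) ^ 2 = exp (w / 4) := by rw [← exp_nat_mul]; ring_nf
  have h4 : 1 + w ≤ 3 * exp (w / 4) := by
    nlinarith [pow_le_pow_left₀ (by linarith) h8 2, sq_nonneg (w - 8 / 3)]
  calc (1 + w) * exp (-w / 2) ≤ 3 * exp (w / 4) * exp (-w / 2) := by gcongr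
    _ = 3 * exp (-w / 4) := by rw [mul_assoc, ← exp_add]; ring_nf

lemma exp_neg_le_inv {v : ℝ} (hv : 0 < v) : exp (-v) ≤ v⁻¹ := by
  rw [exp_neg]
  exact inv_anti₀ hv (by linarith [add_one_le_exp v])

lemma sq_sub_le_two_mul_add_sq {a : ℝ} (ha : 0 ≤ a) (x y : ℝ) :
    (x - y) ^ 2 ≤ 2 * ((x - a * y) ^ 2 + (y - a * x) ^ 2) := by
  nlinarith [sq_nonneg ((1 - a) * (x + y)), sq_nonneg (a * (x - y)),
    mul_nonneg ha (sq_nonneg (x - y))]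

lemma abs_neg_div_sub_div_le {a σ : ℝ} (ha₀ : 0 ≤ a) (ha₁ : a ≤ 1) (hσ : 0 < σ) (u v : ℝ) :
    |-(1 + a ^ 2) / (2 * σ) - 2 * a * u * v / σ ^ 2| ≤ (1 + (u ^ 2 + v ^ 2) / σ) / σ := by
  have hconst : |-(1 + a ^ 2) / (2 * σ)| ≤ 1 / σ := by
    rw [abs_div, abs_neg, abs_of_pos (by positivity), abs_of_pos (by positivity),
      div_le_div_iff₀ (by positivity) hσ]
    nlinarith [mul_nonneg (mul_nonneg (sub_nonneg.2 ha₁) (by linarith : 0 ≤ 1 + a)) hσ.le]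
  have hcross : |2 * a * u * v / σ ^ 2| ≤ (u ^ 2 + v ^ 2) / σ ^ 2 := by
    rw [abs_div, abs_of_pos (pow_pos hσ 2)]
    gcongr
    have hv : 0 ≤ (1 - a ^ 2) * v ^ 2 := mul_nonneg (by nlinarith) (sq_nonneg v)
    refine abs_le.2 ⟨?_, ?_⟩ <;> nlinarith [sq_nonneg (u + a * v), sq_nonneg (u - a * v)]
  calc _ ≤ |-(1 + a ^ 2) / (2 * σ)| + |2 * a * u * v / σ ^ 2| := abs_sub _ _
    _ ≤ 1 / σ + (u ^ 2 + v ^ 2) / σ ^ 2 := add_le_add hconst hcross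
    _ = (1 + (u ^ 2 + v ^ 2) / σ) / σ := by field_simp

lemma mul_sqrt_exp_neg_div_le {s : ℝ} (hs : 0 < s) :
    s * √(exp (-s) / (1 - exp (-2 * s))) / (1 - exp (-2 * s)) ≤ 6 / √s := by
  have hσ := one_sub_exp_neg_two_mul_pos hs
  set σ := 1 - exp (-2 * s)
  have hcube : s ^ 3 * exp (-s) ≤ 27 * σ ^ 3 := by
    have hexp : exp (-s / 3) ^ 3 = exp (-s) := by rw [← exp_nat_mul]; ring_nf
    have := pow_le_pow_left₀ (by positivity) (mul_exp_neg_div_three_le hs.le) 3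
    rw [← hexp]; linarith
  rw [← pow_le_pow_iff_left₀ (by positivity) (by positivity) two_ne_zero, div_pow, div_pow,
    mul_pow, sq_sqrt (by positivity), sq_sqrt hs.le, div_le_div_iff₀ (by positivity) hs]
  field_simp
  nlinarith [pow_pos hσ 3]

noncomputable def hermiteHeatKernelLogDeriv (s x y : ℝ) : ℝ :=
  -(1 + exp (-s) ^ 2) / (2 * (1 - exp (-2 * s))) -
    2 * exp (-s) * (x - exp (-s) * y) * (y - exp (-s) * x) / (1 - exp (-2 * s)) ^ 2

lemma hasDerivAt_hermiteHeatKernel (x y : ℝ) {s : ℝ} (hs : 0 < s) :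
    HasDerivAt (fun s => hermiteHeatKernel s x y)
      (hermiteHeatKernel s x y * hermiteHeatKernelLogDeriv s x y) s := by
  have hσ := one_sub_exp_neg_two_mul_pos hs
  have hA : HasDerivAt (fun s => exp (-s)) (-exp (-s)) s := by
    simpa using (hasDerivAt_neg s).exp
  have hS : HasDerivAt (fun s => 1 - exp (-2 * s)) (2 * exp (-2 * s)) s := by
    simpa [mul_comm] using ((hasDerivAt_id s).const_mul (-2)).exp.const_sub 1
  have hP := (hA.div hS hσ.ne').rpow_const (p := 1 / 2) (Or.inl (div_pos (exp_pos _) hσ).ne')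
  have hE := ((((hasDerivAt_const s x).sub (hA.mul_const y)).pow 2).add
    (((hasDerivAt_const s y).sub (hA.mul_const x)).pow 2)).neg.div (hS.const_mul 2)
    (by positivity) |>.exp
  refine ((hP.const_mul (π ^ (-(1 : ℝ) / 2))).mul hE).congr_deriv ?_
  have hsq : exp (-2 * s) = exp (-s) ^ 2 := by rw [← exp_nat_mul]; ring_nf
  simp only [Pi.div_apply, Pi.sub_apply, Pi.add_apply, Pi.neg_apply, Pi.pow_apply]
  rw [rpow_sub (div_pos (exp_pos _) hσ), rpow_one]
  unfold hermiteHeatKernel hermiteHeatKernelLogDeriv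
  rw [hsq] at hσ ⊢
  have := exp_pos (-s)
  field_simp
  ring

lemma abs_mul_hermiteHeatKernel_mul_logDeriv_le (x y : ℝ) {s : ℝ} (hs : 0 < s) :
    |s * (hermiteHeatKernel s x y * hermiteHeatKernelLogDeriv s x y)| ≤
      18 * exp (-(x - y) ^ 2 / (16 * s)) / √s := by
  have hσ := one_sub_exp_neg_two_mul_pos hs
  have ha₁ : exp (-s) ≤ 1 := exp_le_one_iff.2 (by linarith)
  have hπ : π ^ (-(1 : ℝ) / 2) ≤ 1 :=
    rpow_le_one_of_one_le_of_nonpos (by linarith [pi_gt_three]) (by norm_num)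
  have hN := sq_sub_le_two_mul_add_sq (exp_pos (-s)).le x y
  have hσs := one_sub_exp_neg_two_mul_le s
  unfold hermiteHeatKernel hermiteHeatKernelLogDeriv
  set a := exp (-s)
  set σ := 1 - exp (-2 * s)
  set N := (x - a * y) ^ 2 + (y - a * x) ^ 2
  have hlog := abs_neg_div_sub_div_le (exp_pos (-s)).le ha₁ hσ (x - a * y) (y - a * x)
  have hgauss : exp (-(N / σ) / 4) ≤ exp (-(x - y) ^ 2 / (16 * s)) := by
    rw [exp_le_exp, neg_div, neg_div, neg_le_neg_iff, div_div,
      div_le_div_iff₀ (by positivity) (by positivity)]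
    nlinarith [mul_le_mul_of_nonneg_left hσs (by positivity : 0 ≤ N)]
  rw [← sqrt_eq_rpow, show -N / (2 * σ) = -(N / σ) / 2 by field_simp, abs_mul, abs_mul, abs_mul,
    abs_of_pos hs, abs_of_nonneg (by positivity), abs_of_nonneg (by positivity)]
  calc s * (π ^ (-(1 : ℝ) / 2) * √(a / σ) * exp (-(N / σ) / 2) *
          |-(1 + a ^ 2) / (2 * σ) - 2 * a * (x - a * y) * (y - a * x) / σ ^ 2|)
      ≤ s * (1 * √(a / σ) * exp (-(N / σ) / 2) * ((1 + N / σ) / σ)) := by gcongr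
    _ = s * √(a / σ) / σ * ((1 + N / σ) * exp (-(N / σ) / 2)) := by ring
    _ ≤ 6 / √s * (3 * exp (-(N / σ) / 4)) :=
      mul_le_mul (mul_sqrt_exp_neg_div_le hs) (one_add_mul_exp_neg_half_le (by positivity))
        (by positivity) (by positivity)
    _ ≤ 6 / √s * (3 * exp (-(x - y) ^ 2 / (16 * s))) := by gcongr
    _ = 18 * exp (-(x - y) ^ 2 / (16 * s)) / √s := by ring

lemma abs_sq_mul_deriv_hermiteHeatKernel_le (y z : ℝ) {t : ℝ} (ht : 0 < t) :
    |t ^ 2 * deriv (fun s => hermiteHeatKernel s y z) (t ^ 2)| ≤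
      18 * exp (-(y - z) ^ 2 / (16 * t ^ 2)) / t := by
  rw [(hasDerivAt_hermiteHeatKernel y z (pow_pos ht 2)).deriv]
  simpa only [sqrt_sq ht.le] using abs_mul_hermiteHeatKernel_mul_logDeriv_le y z (pow_pos ht 2)

def cone (x : ℝ) : Set (ℝ × ℝ) := {p | 0 < p.2 ∧ |x - p.1| < p.2}

lemma mem_cone {x : ℝ} {p : ℝ × ℝ} : p ∈ cone x ↔ p.1 ∈ Ioo (x - p.2) (x + p.2) := by
  simp only [cone, mem_ofPred_eq, mem_Ioo, abs_sub_lt_iff]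
  constructor
  · rintro ⟨-, h₁, h₂⟩
    constructor <;> linarith
  · rintro ⟨h₁, h₂⟩
    refine ⟨?_, ?_, ?_⟩ <;> linarith

lemma measurableSet_cone (x : ℝ) : MeasurableSet (cone x) :=
  (measurableSet_lt measurable_const measurable_snd).inter
    (measurableSet_lt (measurable_const.sub measurable_fst).abs measurable_snd)

lemma abs_sq_mul_deriv_hermiteHeatKernel_le_of_mem_cone {x y z t : ℝ} (hyt : (y, t) ∈ cone x) :
    |t ^ 2 * deriv (fun s => hermiteHeatKernel s y z) (t ^ 2)| ≤
      if t ≤ |x - z| / 2 then 1152 / |x - z| ^ 2 * t else 18 / t := by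
  obtain ⟨ht, hxy⟩ := hyt
  refine (abs_sq_mul_deriv_hermiteHeatKernel_le y z ht).trans ?_
  split_ifs with hnear
  · have hyz : |x - z| / 2 ≤ |y - z| := by linarith [abs_sub_le x y z]
    have hr : 0 < |x - z| := by linarith
    have hexp : exp (-(y - z) ^ 2 / (16 * t ^ 2)) ≤ (|x - z| ^ 2 / (64 * t ^ 2))⁻¹ := by
      refine (exp_le_exp.2 ?_).trans (exp_neg_le_inv (by positivity))
      rw [neg_div, neg_le_neg_iff, ← sq_abs (y - z),
        div_le_div_iff₀ (by positivity) (by positivity)]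
      nlinarith [pow_le_pow_left₀ (by positivity) hyz 2]
    calc 18 * exp (-(y - z) ^ 2 / (16 * t ^ 2)) / t
          ≤ 18 * (|x - z| ^ 2 / (64 * t ^ 2))⁻¹ / t := by gcongr
      _ = 1152 / |x - z| ^ 2 * t := by field_simp; ring
  · calc 18 * exp (-(y - z) ^ 2 / (16 * t ^ 2)) / t ≤ 18 * 1 / t := by
          gcongr
          exact exp_le_one_iff.2 (div_nonpos_of_nonpos_of_nonneg (by nlinarith) (by positivity))
      _ = 18 / t := by ring

lemma integral_indicator_Ioo_sub_add_const (x t c : ℝ) :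
    ∫ y, (Ioo (x - t) (x + t)).indicator (fun _ => c) y =
      (Ioi 0).indicator (fun t => 2 * t * c) t := by
  rw [integral_indicator_const _ measurableSet_Ioo, Real.volume_real_Ioo, smul_eq_mul,
    show x + t - (x - t) = 2 * t by ring]
  simp only [indicator_apply, mem_Ioi]
  split_ifs with ht
  · rw [max_eq_left (by linarith)]
  · rw [max_eq_right (by linarith), zero_mul]

lemma integrableOn_cone_and_setIntegral_eq {f : ℝ → ℝ} (hf : Measurable f)
    (hint : IntegrableOn (fun t => f t / t) (Ioi 0)) (x : ℝ) :
    IntegrableOn (fun p : ℝ × ℝ => f p.2 / p.2 ^ 2) (cone x) ∧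
      ∫ p in cone x, f p.2 / p.2 ^ 2 = 2 * ∫ t in Ioi 0, f t / t := by
  set G := (cone x).indicator fun p : ℝ × ℝ => f p.2 / p.2 ^ 2
  have hsection :
      ∀ y t, G (y, t) = (Ioo (x - t) (x + t)).indicator (fun _ => f t / t ^ 2) y := by
    intro y t
    by_cases hy : y ∈ Ioo (x - t) (x + t)
    · rw [indicator_of_mem hy]
      exact indicator_of_mem (mem_cone.2 hy) _
    · rw [indicator_of_notMem hy]
      exact indicator_of_notMem (fun h => hy (mem_cone.1 h)) _
  have hGm : AEStronglyMeasurable G (volume.prod volume) :=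
    (((hf.comp measurable_snd).div (measurable_snd.pow_const 2)).indicator
      (measurableSet_cone x)).aestronglyMeasurable
  have hG : Integrable G (volume.prod volume) := by
    refine (integrable_prod_iff' hGm).2 ⟨ae_of_all _ fun t => ?_, ?_⟩
    · simp_rw [hsection]
      exact (integrableOn_const measure_Ioo_lt_top.ne).integrable_indicator measurableSet_Ioo
    · simp_rw [hsection, norm_indicator_eq_indicator_norm, integral_indicator_Ioo_sub_add_const]
      refine (integrable_indicator_iff measurableSet_Ioi).2
        (IntegrableOn.congr_fun (hint.norm.const_mul 2) (fun t (ht : 0 < t) => ?_)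
          measurableSet_Ioi)
      rw [norm_div, norm_div, norm_pow, norm_of_nonneg ht.le]
      field_simp
  refine ⟨(integrable_indicator_iff (measurableSet_cone x)).1 hG, ?_⟩
  rw [← integral_indicator (measurableSet_cone x), ← integral_const_mul,
    ← integral_indicator measurableSet_Ioi]
  change ∫ p, G p ∂(volume.prod volume) = _
  rw [integral_prod_symm G hG]
  simp_rw [hsection, integral_indicator_Ioo_sub_add_const]
  congr 1 with t
  simp only [indicator_apply, mem_Ioi]
  split_ifs with ht
  · field_simp
  · rfl

lemma integrableOn_Ioi_and_integral_ite_rpow_div {a b c q : ℝ} (ha : 0 ≤ a) (hb : 0 < b)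
    (hc : 0 ≤ c) (hq : 0 < q) :
    IntegrableOn (fun t => (if t ≤ b then a * t else c / t) ^ q / t) (Ioi 0) ∧
      ∫ t in Ioi 0, (if t ≤ b then a * t else c / t) ^ q / t =
        ((a * b) ^ q + (c / b) ^ q) / q := by
  have hnear : EqOn (fun t => (if t ≤ b then a * t else c / t) ^ q / t)
      (fun t => a ^ q * t ^ (q - 1)) (Ioc 0 b) := by
    rintro t ⟨ht, htb⟩
    simp only [if_pos htb]
    rw [mul_rpow ha ht.le, rpow_sub_one ht.ne', mul_div_assoc]
  have hfar : EqOn (fun t => (if t ≤ b then a * t else c / t) ^ q / t)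
      (fun t => c ^ q * t ^ (-q - 1)) (Ioi b) := by
    intro t (hbt : b < t)
    have ht : 0 < t := hb.trans hbt
    simp only [if_neg hbt.not_ge]
    rw [div_rpow hc ht.le, rpow_sub_one ht.ne', rpow_neg ht.le]
    ring
  have hint_near : IntegrableOn (fun t => a ^ q * t ^ (q - 1)) (Ioc 0 b) :=
    ((intervalIntegrable_iff_integrableOn_Ioc_of_le hb.le).1
      (intervalIntegral.intervalIntegrable_rpow' (by linarith))).const_mul _
  have hint_far : IntegrableOn (fun t => c ^ q * t ^ (-q - 1)) (Ioi b) :=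
    (integrableOn_Ioi_rpow_of_lt (by linarith) hb).const_mul _
  have h₁ := hint_near.congr_fun hnear.symm measurableSet_Ioc
  have h₂ := hint_far.congr_fun hfar.symm measurableSet_Ioi
  rw [← Ioc_union_Ioi_eq_Ioi hb.le]
  refine ⟨h₁.union h₂, ?_⟩
  rw [setIntegral_union Ioc_disjoint_Ioi_same measurableSet_Ioi h₁ h₂,
    setIntegral_congr_fun measurableSet_Ioc hnear, setIntegral_congr_fun measurableSet_Ioi hfar,
    integral_const_mul, integral_const_mul, ← intervalIntegral.integral_of_le hb.le,
    integral_rpow (Or.inl (by linarith)), integral_Ioi_rpow_of_lt (by linarith) hb,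
    sub_add_cancel, show -q - 1 + 1 = -q by ring, zero_rpow hq.ne', mul_rpow ha hb.le,
    div_rpow hc hb.le, rpow_neg hb.le]
  field_simp
  ring

lemma two_mul_add_rpow_div_le {A B q : ℝ} (hB : 0 ≤ B) (hBA : B ≤ A) (hq : 2 ≤ q) :
    2 * (A ^ q + B ^ q) / q ≤ (2 * A) ^ q := by
  have hA : 0 ≤ A := hB.trans hBA
  have hBAq : B ^ q ≤ A ^ q := rpow_le_rpow hB hBA (by linarith)
  have htwo : (2 : ℝ) ≤ 2 ^ q := by
    simpa using rpow_le_rpow_of_exponent_le one_le_two (by linarith : (1 : ℝ) ≤ q)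
  have hfour : 4 ≤ 2 ^ q * q := by nlinarith
  rw [mul_rpow zero_le_two hA, div_le_iff₀ (by linarith)]
  nlinarith [mul_le_mul_of_nonneg_right hfour (rpow_nonneg hA q)]

theorem stmt8 :
    ∃ C > 0, ∀ q : ℝ, 2 ≤ q → ∀ x z : ℝ, x ≠ z →
      (∫ p in {p : ℝ × ℝ | 0 < p.2 ∧ |x - p.1| < p.2},
          |p.2 ^ 2 * deriv (fun s => hermiteHeatKernel s p.1 z) (p.2 ^ 2)| ^ q / p.2 ^ 2) ^
        (1 / q) ≤ C / |x - z| := by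
  refine ⟨1152, by norm_num, fun q hq x z hxz => ?_⟩
  have hq₀ : 0 < q := by linarith
  have hr : 0 < |x - z| := abs_pos.2 (sub_ne_zero.2 hxz)
  set h : ℝ → ℝ := fun t => if t ≤ |x - z| / 2 then 1152 / |x - z| ^ 2 * t else 18 / t
  obtain ⟨hint, hval⟩ := integrableOn_Ioi_and_integral_ite_rpow_div
    (by positivity : 0 ≤ 1152 / |x - z| ^ 2) (half_pos hr) (by norm_num : (0 : ℝ) ≤ 18) hq₀
  have hmeas : Measurable fun t => h t ^ q :=
    (Measurable.ite measurableSet_Iic (by fun_prop) (by fun_prop)).pow_const q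
  obtain ⟨hmaj_int, hmaj_val⟩ := integrableOn_cone_and_setIntegral_eq hmeas hint x
  have hle_maj :
      ∫ p in cone x, |p.2 ^ 2 * deriv (fun s => hermiteHeatKernel s p.1 z) (p.2 ^ 2)| ^ q / p.2 ^ 2
        ≤ ∫ p in cone x, h p.2 ^ q / p.2 ^ 2 :=
    integral_mono_of_nonneg (ae_of_all _ fun p => by positivity) hmaj_int
      (ae_restrict_of_forall_mem (measurableSet_cone x) fun p hp =>
        div_le_div_of_nonneg_right (rpow_le_rpow (abs_nonneg _)
          (abs_sq_mul_deriv_hermiteHeatKernel_le_of_mem_cone hp) hq₀.le) (sq_nonneg _))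
  have hmaj : ∫ p in cone x, h p.2 ^ q / p.2 ^ 2 ≤ (1152 / |x - z|) ^ q := by
    rw [hmaj_val, hval,
      show 1152 / |x - z| ^ 2 * (|x - z| / 2) = 576 / |x - z| by field_simp; ring,
      show 18 / (|x - z| / 2) = 36 / |x - z| by field_simp; ring,
      show 1152 / |x - z| = 2 * (576 / |x - z|) by ring, ← mul_div_assoc]
    exact two_mul_add_rpow_div_le (by positivity) (by gcongr; norm_num) hq
  show (∫ p in cone x, _) ^ (1 / q) ≤ _
  calc _ ≤ ((1152 / |x - z|) ^ q) ^ (1 / q) :=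
        rpow_le_rpow (integral_nonneg fun p => by positivity) (hle_maj.trans hmaj) (by positivity)
    _ = 1152 / |x - z| := by rw [← rpow_mul (by positivity), mul_one_div_cancel hq₀.ne', rpow_one]
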